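/- Let T, P : ℤ → GL(2,ℝ) with sup_{i∈ℤ} ‖T(i)‖ < ∞ and sup_{i∈ℤ} ‖P(i)‖ < ∞, and let Q : ℤ → GL(2,ℝ) be such that P(i) = Q(i+1) T(i) Q(i)⁻¹ for all i ∈ ℤ. Assume there exist constants 0 < C₂ ≤ C₁ with C₂‖x‖ ≤ ‖Q(i)x‖ ≤ C₁‖x‖ for all i ∈ ℤ and all x ∈ ℝ². Then P admits a dominated splitting if and only if T admits a dominated splitting. -/

import Mathlib

open Matrix

noncomputable section

/-- Euclidean plane. -/
abbrev E2 := EuclideanSpace ℝ (Fin 2)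

/-- The real projective line, as the projectivization of `ℝ²`. -/
abbrev RP1 := Projectivization ℝ E2

/-- The linear map on `E2` induced by a `2×2` matrix. -/
def matLin (A : Matrix (Fin 2) (Fin 2) ℝ) : E2 →ₗ[ℝ] E2 :=
  (WithLp.linearEquiv 2 ℝ (Fin 2 → ℝ)).symm.toLinearMap ∘ₗ
    A.mulVecLin ∘ₗ (WithLp.linearEquiv 2 ℝ (Fin 2 → ℝ)).toLinearMap

/-- Matrix-vector multiplication on `E2`. -/
def mulVecE (A : Matrix (Fin 2) (Fin 2) ℝ) (v : E2) : E2 := matLin A v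

/-- The action of an (invertible) matrix on the projective line `RP1`
(junk value if the matrix is not injective). -/
def matAct (A : Matrix (Fin 2) (Fin 2) ℝ) (x : RP1) : RP1 :=
  open scoped Classical in
  if h : Function.Injective (matLin A) then Projectivization.map (matLin A) h x else x

/-- The (Euclidean) operator norm of a `2×2` matrix. -/
def matOpNorm (A : Matrix (Fin 2) (Fin 2) ℝ) : ℝ :=
  ‖LinearMap.toContinuousLinearMap (matLin A)‖

/-- The metric `d([u],[w]) = √(1 − (⟨u,w⟩/(‖u‖‖w‖))²)` on `RP1`. -/
def projDist (x y : RP1) : ℝ :=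
  Real.sqrt (1 - ((inner ℝ x.rep y.rep : ℝ) / (‖x.rep‖ * ‖y.rep‖)) ^ 2)

/-- Forward cocycle iterates: `fwd A n i = A(i+n−1)⋯A(i)`. -/
def fwd (A : ℤ → Matrix (Fin 2) (Fin 2) ℝ) : ℕ → ℤ → Matrix (Fin 2) (Fin 2) ℝ
  | 0, _ => 1
  | n + 1, i => A (i + n) * fwd A n i

/-- Backward cocycle iterates: `bwd A n i = A(i−n)⁻¹⋯A(i−1)⁻¹`. -/
def bwd (A : ℤ → Matrix (Fin 2) (Fin 2) ℝ) : ℕ → ℤ → Matrix (Fin 2) (Fin 2) ℝ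
  | 0, _ => 1
  | n + 1, i => bwd A n (i - 1) * (A (i - 1))⁻¹

/-- `w` is a nonzero vector spanning the line `x ∈ RP1`. -/
def SpansLine (w : E2) (x : RP1) : Prop := ∃ h : w ≠ 0, Projectivization.mk ℝ w h = x

/-- Uniform hyperbolicity witnessed by unstable/stable directions `u`, `s`. -/
def IsUHWith (P : ℤ → Matrix (Fin 2) (Fin 2) ℝ) (u s : ℤ → RP1) : Prop :=
  (∀ i : ℤ, matAct (P i) (u i) = u (i + 1) ∧ matAct (P i) (s i) = s (i + 1)) ∧
  ∃ C > 0, ∃ η > 1, ∀ i : ℤ, ∀ n : ℕ,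
    (∀ w : E2, ‖w‖ = 1 → SpansLine w (u i) → ‖mulVecE (bwd P n i) w‖ ≤ C / η ^ n) ∧
    (∀ w : E2, ‖w‖ = 1 → SpansLine w (s i) → ‖mulVecE (fwd P n i) w‖ ≤ C / η ^ n)

/-- Uniform hyperbolicity of a cocycle. -/
def IsUH (P : ℤ → Matrix (Fin 2) (Fin 2) ℝ) : Prop := ∃ u s, IsUHWith P u s

/-- Dominated splitting (DS1)–(DS4). -/
def IsDS (T : ℤ → Matrix (Fin 2) (Fin 2) ℝ) : Prop :=
  ∃ u s : ℤ → RP1,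
    (∀ i : ℤ, matAct (T i) (u i) = u (i + 1) ∧ matAct (T i) (s i) = s (i + 1)) ∧
    ∃ N : ℕ, 1 ≤ N ∧
      (∃ η > 1, ∀ i : ℤ, ∀ w w' : E2, ‖w‖ = 1 → ‖w'‖ = 1 →
        SpansLine w (u i) → SpansLine w' (s i) →
        ‖mulVecE (fwd T N i) w‖ > η * ‖mulVecE (fwd T N i) w'‖) ∧
      (∃ δ > 0, ∀ i : ℤ, projDist (u i) (s i) > δ) ∧
      (∃ c > 0, ∀ i : ℤ, c ≤ matOpNorm (fwd T N i))

/-!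
Conjugation by `Q` carries invariant lines `u, s` of `T` to invariant lines `Q u, Q s` of `P`.
Since `Q` is uniformly bi-Lipschitz, it changes the growth of a vector along the cocycle by a
factor in `[C₂ / C₁, C₁ / C₂]`, and it shrinks the angle between two lines by at most
`(C₂ / C₁) ^ 2`, because it scales the area form by `|det Q| ≥ C₂ ^ 2`. The domination ratio thus
loses at most `(C₁ / C₂) ^ 2`, which is absorbed by passing from `N` to a multiple `(k + 1) N`.
For (DS4), the angle bound shows that the norm of a dominated product is at most `2 / δ` times its
growth along `u`, and growth along an invariant line is multiplicative. The converse is the same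
argument for `Q⁻¹`.
-/

open Projectivization

local notation "Mat₂" => Matrix (Fin 2) (Fin 2) ℝ

def crossE (v w : E2) : ℝ := v 0 * w 1 - v 1 * w 0

lemma inner_E2 (v w : E2) : (inner ℝ v w : ℝ) = v 0 * w 0 + v 1 * w 1 := by
  simp [PiLp.inner_apply, Fin.sum_univ_two, mul_comm]

lemma inner_sq_add_crossE_sq (v w : E2) :
    (inner ℝ v w : ℝ) ^ 2 + crossE v w ^ 2 = ‖v‖ ^ 2 * ‖w‖ ^ 2 := by
  rw [← real_inner_self_eq_norm_sq, ← real_inner_self_eq_norm_sq, inner_E2, inner_E2, inner_E2,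
    crossE]
  ring

lemma abs_crossE_le (v w : E2) : |crossE v w| ≤ ‖v‖ * ‖w‖ := by
  refine abs_le_of_sq_le_sq ?_ (by positivity)
  nlinarith [inner_sq_add_crossE_sq v w, sq_nonneg (inner ℝ v w : ℝ)]

lemma crossE_smul_smul (a b : ℝ) (v w : E2) :
    crossE (a • v) (b • w) = a * b * crossE v w := by
  simp only [crossE, PiLp.smul_apply, smul_eq_mul]
  ring

lemma crossE_smul_eq_add (a e v : E2) : crossE a e • v = crossE v e • a + crossE a v • e := by
  ext j
  fin_cases j <;> simp [crossE] <;> ring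

lemma crossE_single : crossE (EuclideanSpace.single 0 1) (EuclideanSpace.single 1 1) = 1 := by
  simp [crossE]

lemma mulVecE_apply (A : Mat₂) (v : E2) (i : Fin 2) :
    mulVecE A v i = A i 0 * v 0 + A i 1 * v 1 := by
  fin_cases i <;> simp [mulVecE, matLin]

lemma crossE_mulVecE (A : Mat₂) (v w : E2) :
    crossE (mulVecE A v) (mulVecE A w) = A.det * crossE v w := by
  simp only [crossE, mulVecE_apply, det_fin_two]
  ring

lemma mulVecE_mul (A B : Mat₂) (v : E2) :
    mulVecE (A * B) v = mulVecE A (mulVecE B v) := by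
  ext i; simp [mulVecE, matLin]

lemma mulVecE_one (v : E2) : mulVecE 1 v = v := by
  ext i; simp [mulVecE, matLin]

lemma mulVecE_inv_mulVecE (g : GL (Fin 2) ℝ) (v : E2) :
    mulVecE (g : Mat₂)⁻¹ (mulVecE g v) = v := by
  rw [← coe_units_inv, ← mulVecE_mul, Units.inv_mul, mulVecE_one]

lemma mulVecE_mulVecE_inv (g : GL (Fin 2) ℝ) (v : E2) :
    mulVecE g (mulVecE (g : Mat₂)⁻¹ v) = v := by
  rw [← coe_units_inv, ← mulVecE_mul, Units.mul_inv, mulVecE_one]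

lemma mulVecE_smul (A : Mat₂) (c : ℝ) (v : E2) :
    mulVecE A (c • v) = c • mulVecE A v :=
  map_smul (matLin A) c v

lemma mulVecE_add (A : Mat₂) (v w : E2) :
    mulVecE A (v + w) = mulVecE A v + mulVecE A w :=
  map_add (matLin A) v w

lemma norm_mulVecE_le_matOpNorm (M : Mat₂) (x : E2) :
    ‖mulVecE M x‖ ≤ matOpNorm M * ‖x‖ :=
  (LinearMap.toContinuousLinearMap (matLin M)).le_opNorm x

lemma matOpNorm_le_of_forall {M : Mat₂} {K : ℝ} (hK : 0 ≤ K)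
    (h : ∀ x : E2, ‖mulVecE M x‖ ≤ K * ‖x‖) : matOpNorm M ≤ K :=
  ContinuousLinearMap.opNorm_le_bound _ hK h

lemma mulVecE_ne_zero {A : Mat₂} (hA : IsUnit A) {v : E2} (hv : v ≠ 0) :
    mulVecE A v ≠ 0 := by
  obtain ⟨g, rfl⟩ := hA
  intro h
  apply hv
  rw [← mulVecE_inv_mulVecE g v, h]
  exact map_zero (matLin _)

lemma matAct_mk {A : Mat₂} (hA : IsUnit A) {v : E2} (hv : v ≠ 0) :
    matAct A (mk ℝ v hv) = mk ℝ (mulVecE A v) (mulVecE_ne_zero hA hv) := by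
  obtain ⟨g, rfl⟩ := hA
  have hinj : Function.Injective (matLin g) := fun v w h => by
    rw [← mulVecE_inv_mulVecE g v, ← mulVecE_inv_mulVecE g w]
    exact congrArg (mulVecE (g : Mat₂)⁻¹) h
  rw [matAct, dif_pos hinj]
  rfl

lemma matAct_mul {A B : Mat₂} (hA : IsUnit A) (hB : IsUnit B) (x : RP1) :
    matAct (A * B) x = matAct A (matAct B x) := by
  induction x using Projectivization.ind with
  | h v hv => simp only [matAct_mk, hA, hB, hA.mul hB, mulVecE_mul]

lemma matAct_one (x : RP1) : matAct 1 x = x := by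
  induction x using Projectivization.ind with
  | h v hv => simp only [matAct_mk isUnit_one, mulVecE_one]

lemma matAct_conj (h g k : GL (Fin 2) ℝ) (x : RP1) :
    matAct (h * g * (k : Mat₂)⁻¹) (matAct k x) = matAct h (matAct g x) := by
  rw [← coe_units_inv, ← Units.val_mul, ← Units.val_mul,
    ← matAct_mul (h * g * k⁻¹).isUnit k.isUnit, ← Units.val_mul, inv_mul_cancel_right,
    Units.val_mul, matAct_mul h.isUnit g.isUnit]

def unitRep (x : RP1) : E2 := ‖x.rep‖⁻¹ • x.rep

lemma norm_unitRep (x : RP1) : ‖unitRep x‖ = 1 := by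
  rw [unitRep, norm_smul, norm_inv, norm_norm, inv_mul_cancel₀ (norm_ne_zero_iff.2 x.rep_nonzero)]

lemma unitRep_ne_zero (x : RP1) : unitRep x ≠ 0 :=
  norm_ne_zero_iff.1 (by rw [norm_unitRep]; exact one_ne_zero)

lemma mk_unitRep (x : RP1) : mk ℝ (unitRep x) (unitRep_ne_zero x) = x := by
  conv_rhs => rw [← x.mk_rep]
  exact (mk_eq_mk_iff' ℝ _ _ _ _).2 ⟨_, rfl⟩

lemma spansLine_unitRep (x : RP1) : SpansLine (unitRep x) x := ⟨unitRep_ne_zero x, mk_unitRep x⟩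

lemma SpansLine.mulVecE {A : Mat₂} (hA : IsUnit A) {w : E2} {x : RP1}
    (hw : SpansLine w x) : SpansLine (mulVecE A w) (matAct A x) := by
  obtain ⟨hw0, rfl⟩ := hw
  exact ⟨mulVecE_ne_zero hA hw0, (matAct_mk hA hw0).symm⟩

lemma SpansLine.exists_smul_unitRep {w : E2} {x : RP1} (hw : SpansLine w x) :
    ∃ c : ℝ, |c| = ‖w‖ ∧ c • unitRep x = w := by
  obtain ⟨hw0, rfl⟩ := hw
  obtain ⟨c, hc⟩ := (mk_eq_mk_iff' ℝ _ _ hw0 (unitRep_ne_zero _)).1 (mk_unitRep _).symm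
  refine ⟨c, ?_, hc⟩
  rw [← hc, norm_smul, norm_unitRep, mul_one, Real.norm_eq_abs]

lemma projDist_eq_abs_crossE_rep (x y : RP1) :
    projDist x y = |crossE x.rep y.rep| / (‖x.rep‖ * ‖y.rep‖) := by
  have hx : ‖x.rep‖ ≠ 0 := norm_ne_zero_iff.2 x.rep_nonzero
  have hy : ‖y.rep‖ ≠ 0 := norm_ne_zero_iff.2 y.rep_nonzero
  have hsq : 1 - ((inner ℝ x.rep y.rep : ℝ) / (‖x.rep‖ * ‖y.rep‖)) ^ 2
      = (crossE x.rep y.rep / (‖x.rep‖ * ‖y.rep‖)) ^ 2 := by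
    field_simp
    linear_combination -inner_sq_add_crossE_sq x.rep y.rep
  rw [projDist, hsq, Real.sqrt_sq_eq_abs, abs_div, abs_mul, abs_norm, abs_norm]

lemma projDist_eq_abs_crossE_unitRep (x y : RP1) :
    projDist x y = |crossE (unitRep x) (unitRep y)| := by
  rw [projDist_eq_abs_crossE_rep, unitRep, unitRep, crossE_smul_smul, abs_mul, abs_mul,
    abs_inv, abs_inv, abs_norm, abs_norm]
  field_simp

lemma projDist_mk {v w : E2} (hv : v ≠ 0) (hw : w ≠ 0) :
    projDist (mk ℝ v hv) (mk ℝ w hw) = |crossE v w| / (‖v‖ * ‖w‖) := by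
  obtain ⟨a, ha, hav⟩ := SpansLine.exists_smul_unitRep ⟨hv, rfl⟩
  obtain ⟨b, hb, hbw⟩ := SpansLine.exists_smul_unitRep ⟨hw, rfl⟩
  have hvw : crossE v w = a * b * crossE (unitRep (mk ℝ v hv)) (unitRep (mk ℝ w hw)) := by
    rw [← crossE_smul_smul, hav, hbw]
  have ha0 : a ≠ 0 := by rintro rfl; exact hv (by simpa using hav.symm)
  have hb0 : b ≠ 0 := by rintro rfl; exact hw (by simpa using hbw.symm)
  rw [projDist_eq_abs_crossE_unitRep, hvw, abs_mul, abs_mul, ← ha, ← hb]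
  field_simp

def normOnLine (M : Mat₂) (x : RP1) : ℝ := ‖mulVecE M (unitRep x)‖

lemma norm_mulVecE_of_spansLine (M : Mat₂) {w : E2} {x : RP1}
    (hw : SpansLine w x) : ‖mulVecE M w‖ = ‖w‖ * normOnLine M x := by
  obtain ⟨c, hc, rfl⟩ := hw.exists_smul_unitRep
  rw [mulVecE_smul, norm_smul, Real.norm_eq_abs, hc, normOnLine]

lemma normOnLine_nonneg (M : Mat₂) (x : RP1) : 0 ≤ normOnLine M x := norm_nonneg _

lemma normOnLine_le_matOpNorm (M : Mat₂) (x : RP1) :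
    normOnLine M x ≤ matOpNorm M := by
  simpa [normOnLine, norm_unitRep] using norm_mulVecE_le_matOpNorm M (unitRep x)

lemma normOnLine_mul (M : Mat₂) {G : Mat₂}
    (hG : IsUnit G) (x : RP1) :
    normOnLine (M * G) x = normOnLine G x * normOnLine M (matAct G x) := by
  rw [normOnLine, mulVecE_mul, norm_mulVecE_of_spansLine M ((spansLine_unitRep x).mulVecE hG)]
  rfl

def BiLipschitzWith (a b : ℝ) (g : GL (Fin 2) ℝ) : Prop :=
  ∀ x : E2, a * ‖x‖ ≤ ‖mulVecE g x‖ ∧ ‖mulVecE g x‖ ≤ b * ‖x‖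

lemma BiLipschitzWith.le {a b : ℝ} {g : GL (Fin 2) ℝ} (hg : BiLipschitzWith a b g) :
    a ≤ b := by
  obtain ⟨hlo, hhi⟩ := hg (EuclideanSpace.single 0 1)
  simpa using hlo.trans hhi

lemma BiLipschitzWith.inv {a b : ℝ} {g : GL (Fin 2) ℝ} (hg : BiLipschitzWith a b g)
    (ha : 0 < a) : BiLipschitzWith b⁻¹ a⁻¹ g⁻¹ := by
  intro x
  rw [coe_units_inv]
  have hb : 0 < b := ha.trans_le hg.le
  obtain ⟨hlo, hhi⟩ := hg (mulVecE (g : Mat₂)⁻¹ x)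
  rw [mulVecE_mulVecE_inv] at hlo hhi
  constructor
  · rw [inv_mul_le_iff₀ hb]; exact hhi
  · rw [le_inv_mul_iff₀ ha]; exact hlo

lemma sq_le_abs_det {a : ℝ} {g : GL (Fin 2) ℝ} (ha : 0 ≤ a)
    (hg : ∀ x : E2, a * ‖x‖ ≤ ‖mulVecE g x‖) : a ^ 2 ≤ |(g : Mat₂).det| := by
  set v := mulVecE (g : Mat₂)⁻¹ (EuclideanSpace.single 0 1)
  set w := mulVecE (g : Mat₂)⁻¹ (EuclideanSpace.single 1 1)
  have hdet : (g : Mat₂).det * crossE v w = 1 := by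
    rw [← crossE_mulVecE, mulVecE_mulVecE_inv, mulVecE_mulVecE_inv, crossE_single]
  have hv : a * ‖v‖ ≤ 1 := (hg v).trans_eq (by rw [mulVecE_mulVecE_inv]; simp)
  have hw : a * ‖w‖ ≤ 1 := (hg w).trans_eq (by rw [mulVecE_mulVecE_inv]; simp)
  have hcross : a ^ 2 * |crossE v w| ≤ |(g : Mat₂).det| * |crossE v w| :=
    calc a ^ 2 * |crossE v w| ≤ a ^ 2 * (‖v‖ * ‖w‖) := by gcongr; exact abs_crossE_le v w
      _ = (a * ‖v‖) * (a * ‖w‖) := by ring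
      _ ≤ 1 := mul_le_one₀ hv (by positivity) hw
      _ = |(g : Mat₂).det| * |crossE v w| := by rw [← abs_mul, hdet, abs_one]
  exact le_of_mul_le_mul_right hcross (abs_pos.2 (right_ne_zero_of_mul_eq_one hdet))

lemma matAct_eq_mk {A : Mat₂} (hA : IsUnit A) (x : RP1) :
    matAct A x = mk ℝ (mulVecE A (unitRep x)) (mulVecE_ne_zero hA (unitRep_ne_zero x)) := by
  conv_lhs => rw [← mk_unitRep x]
  exact matAct_mk hA _

lemma BiLipschitzWith.projDist_matAct {a b : ℝ} {g : GL (Fin 2) ℝ} (hg : BiLipschitzWith a b g)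
    (ha : 0 ≤ a) (x y : RP1) :
    (a / b) ^ 2 * projDist x y ≤ projDist (matAct g x) (matAct g y) := by
  have hv := norm_pos_iff.2 (mulVecE_ne_zero g.isUnit (unitRep_ne_zero x))
  have hw := norm_pos_iff.2 (mulVecE_ne_zero g.isUnit (unitRep_ne_zero y))
  have hvb : ‖mulVecE g (unitRep x)‖ ≤ b := by simpa [norm_unitRep] using (hg (unitRep x)).2
  have hwb : ‖mulVecE g (unitRep y)‖ ≤ b := by simpa [norm_unitRep] using (hg (unitRep y)).2
  have hdet := sq_le_abs_det ha fun z => (hg z).1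
  rw [projDist_eq_abs_crossE_unitRep, matAct_eq_mk g.isUnit, matAct_eq_mk g.isUnit, projDist_mk,
    crossE_mulVecE, abs_mul]
  calc (a / b) ^ 2 * |crossE (unitRep x) (unitRep y)|
      = a ^ 2 * |crossE (unitRep x) (unitRep y)| / (b * b) := by ring
    _ ≤ |(g : Mat₂).det| * |crossE (unitRep x) (unitRep y)|
          / (‖mulVecE g (unitRep x)‖ * ‖mulVecE g (unitRep y)‖) := by
        gcongr
        linarith

lemma BiLipschitzWith.normOnLine_conj {a b : ℝ} {h k : GL (Fin 2) ℝ}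
    (hh : BiLipschitzWith a b h) (hk : BiLipschitzWith a b k) (ha : 0 < a) (M : Mat₂) (x : RP1) :
    a / b * normOnLine M x ≤ normOnLine ((h : Mat₂) * M * (k : Mat₂)⁻¹) (matAct k x) ∧
      normOnLine ((h : Mat₂) * M * (k : Mat₂)⁻¹) (matAct k x)
        ≤ b / a * normOnLine M x := by
  set N' := normOnLine ((h : Mat₂) * M * (k : Mat₂)⁻¹) (matAct k x)
  have hN' : 0 ≤ N' := normOnLine_nonneg _ _
  have hw := norm_mulVecE_of_spansLine ((h : Mat₂) * M * (k : Mat₂)⁻¹)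
    ((spansLine_unitRep x).mulVecE k.isUnit)
  rw [mulVecE_mul, mulVecE_mul, mulVecE_inv_mulVecE] at hw
  obtain ⟨hwa, hwb⟩ := hk (unitRep x)
  rw [norm_unitRep, mul_one] at hwa hwb
  obtain ⟨hMa, hMb⟩ := hh (mulVecE M (unitRep x))
  change a * normOnLine M x ≤ _ at hMa
  change _ ≤ b * normOnLine M x at hMb
  have hb : 0 < b := ha.trans_le hk.le
  constructor
  · rw [div_mul_eq_mul_div, div_le_iff₀ hb]
    calc a * normOnLine M x ≤ ‖mulVecE k (unitRep x)‖ * N' := hMa.trans_eq hw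
      _ ≤ N' * b := by rw [mul_comm N']; exact mul_le_mul_of_nonneg_right hwb hN'
  · rw [div_mul_eq_mul_div, le_div_iff₀ ha]
    calc N' * a ≤ ‖mulVecE k (unitRep x)‖ * N' := by
          rw [mul_comm N']; exact mul_le_mul_of_nonneg_right hwa hN'
      _ ≤ b * normOnLine M x := hw.symm.trans_le hMb

lemma BiLipschitzWith.mul_normOnLine_conj_lt {a b η : ℝ} {h k : GL (Fin 2) ℝ}
    (hh : BiLipschitzWith a b h) (hk : BiLipschitzWith a b k) (ha : 0 < a) (hη : 0 ≤ η)
    {M : Mat₂} {x y : RP1} (hdom : η * normOnLine M y < normOnLine M x) :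
    η * (a / b) ^ 2 * normOnLine ((h : Mat₂) * M * (k : Mat₂)⁻¹) (matAct k y)
      < normOnLine ((h : Mat₂) * M * (k : Mat₂)⁻¹) (matAct k x) := by
  have hb : 0 < b := ha.trans_le hk.le
  calc η * (a / b) ^ 2 * normOnLine ((h : Mat₂) * M * (k : Mat₂)⁻¹) (matAct k y)
      ≤ η * (a / b) ^ 2 * (b / a * normOnLine M y) := by
        gcongr; exact (hh.normOnLine_conj hk ha M y).2
    _ = a / b * (η * normOnLine M y) := by field_simp
    _ < a / b * normOnLine M x := by gcongr
    _ ≤ _ := (hh.normOnLine_conj hk ha M x).1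

lemma matOpNorm_le_of_dominated {M : Mat₂} {x y : RP1} {δ : ℝ} (hδ : 0 < δ)
    (hsep : δ ≤ projDist x y) (hdom : normOnLine M y ≤ normOnLine M x) :
    δ * matOpNorm M ≤ 2 * normOnLine M x := by
  rw [projDist_eq_abs_crossE_unitRep] at hsep
  set a := unitRep x
  set e := unitRep y
  suffices h : ∀ v : E2, ‖mulVecE M v‖ ≤ 2 * normOnLine M x / δ * ‖v‖ by
    have := matOpNorm_le_of_forall (by have := normOnLine_nonneg M x; positivity) h
    rwa [le_div_iff₀' hδ] at this
  intro v
  -- expand `v` in the basis `a, e` by Cramer's rule and apply `M`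
  have hexp :
      crossE a e • mulVecE M v = crossE v e • mulVecE M a + crossE a v • mulVecE M e := by
    rw [← mulVecE_smul, crossE_smul_eq_add, mulVecE_add, mulVecE_smul, mulVecE_smul]
  have hve : |crossE v e| ≤ ‖v‖ := by simpa [e, norm_unitRep] using abs_crossE_le v e
  have hav : |crossE a v| ≤ ‖v‖ := by simpa [a, norm_unitRep] using abs_crossE_le a v
  have hMe : ‖mulVecE M e‖ ≤ normOnLine M x := hdom
  rw [div_mul_eq_mul_div, le_div_iff₀ hδ]
  calc ‖mulVecE M v‖ * δ ≤ |crossE a e| * ‖mulVecE M v‖ := by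
        rw [mul_comm]; exact mul_le_mul_of_nonneg_right hsep (norm_nonneg _)
    _ = ‖crossE v e • mulVecE M a + crossE a v • mulVecE M e‖ := by
        rw [← hexp, norm_smul, Real.norm_eq_abs]
    _ ≤ |crossE v e| * ‖mulVecE M a‖ + |crossE a v| * ‖mulVecE M e‖ := by
        refine (norm_add_le _ _).trans_eq ?_
        rw [norm_smul, norm_smul, Real.norm_eq_abs, Real.norm_eq_abs]
    _ ≤ ‖v‖ * normOnLine M x + ‖v‖ * normOnLine M x := by
        gcongr
        exact le_rfl
    _ = 2 * normOnLine M x * ‖v‖ := by ring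

lemma fwd_add (A : ℤ → Mat₂) (m n : ℕ) (i : ℤ) :
    fwd A (m + n) i = fwd A m (i + n) * fwd A n i := by
  induction m with
  | zero => simp [fwd]
  | succ m ih =>
    rw [Nat.add_right_comm, fwd, ih, fwd, mul_assoc]
    push_cast
    ring_nf

section Cocycle

variable {T : ℤ → GL (Fin 2) ℝ}

lemma isUnit_fwd (T : ℤ → GL (Fin 2) ℝ) (n : ℕ) (i : ℤ) :
    IsUnit (fwd (Units.val ∘ T) n i) := by
  induction n with
  | zero => exact isUnit_one
  | succ n ih => exact (T (i + n)).isUnit.mul ih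

lemma matAct_fwd {u : ℤ → RP1} (hu : ∀ i, matAct (T i) (u i) = u (i + 1))
    (n : ℕ) (i : ℤ) :
    matAct (fwd (Units.val ∘ T) n i) (u i) = u (i + n) := by
  induction n with
  | zero => simp [fwd, matAct_one]
  | succ n ih =>
    rw [fwd, Function.comp_apply, matAct_mul (T (i + n)).isUnit (isUnit_fwd T n i), ih]
    exact (hu _).trans (by push_cast; ring_nf)

lemma normOnLine_fwd_add {u : ℤ → RP1} (hu : ∀ i, matAct (T i) (u i) = u (i + 1))
    (m n : ℕ) (i : ℤ) :
    normOnLine (fwd (Units.val ∘ T) (m + n) i) (u i)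
      = normOnLine (fwd (Units.val ∘ T) n i) (u i)
        * normOnLine (fwd (Units.val ∘ T) m (i + n)) (u (i + n)) := by
  rw [fwd_add, normOnLine_mul _ (isUnit_fwd T n i), matAct_fwd hu]

lemma pow_le_normOnLine_fwd {u : ℤ → RP1} (hu : ∀ i, matAct (T i) (u i) = u (i + 1)) {N : ℕ}
    {b : ℝ} (hb : 0 ≤ b) (hlow : ∀ i, b ≤ normOnLine (fwd (Units.val ∘ T) N i) (u i))
    (k : ℕ) (i : ℤ) : b ^ k ≤ normOnLine (fwd (Units.val ∘ T) (k * N) i) (u i) := by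
  induction k with
  | zero => simp [fwd, normOnLine, mulVecE_one, norm_unitRep]
  | succ k ih =>
    rw [add_one_mul, add_comm (k * N), normOnLine_fwd_add hu, pow_succ]
    exact mul_le_mul ih (hlow _) hb (normOnLine_nonneg _ _)

lemma pow_mul_normOnLine_fwd_lt {u s : ℤ → RP1} (hu : ∀ i, matAct (T i) (u i) = u (i + 1))
    (hs : ∀ i, matAct (T i) (s i) = s (i + 1)) {N : ℕ} {η : ℝ} (hη : 0 ≤ η)
    (hdom : ∀ i, η * normOnLine (fwd (Units.val ∘ T) N i) (s i)
      < normOnLine (fwd (Units.val ∘ T) N i) (u i)) (k : ℕ) (i : ℤ) :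
    η ^ (k + 1) * normOnLine (fwd (Units.val ∘ T) ((k + 1) * N) i) (s i)
      < normOnLine (fwd (Units.val ∘ T) ((k + 1) * N) i) (u i) := by
  induction k with
  | zero => simpa using hdom i
  | succ k ih =>
    rw [add_one_mul (k + 1), add_comm ((k + 1) * N), normOnLine_fwd_add hu, normOnLine_fwd_add hs,
      pow_succ, mul_mul_mul_comm]
    exact mul_lt_mul'' ih (hdom _) (mul_nonneg (pow_nonneg hη _) (normOnLine_nonneg _ _))
      (mul_nonneg hη (normOnLine_nonneg _ _))

end Cocycle

lemma fwd_conj {T P Q : ℤ → GL (Fin 2) ℝ} (hconj : ∀ i, P i = Q (i + 1) * T i * (Q i)⁻¹)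
    (n : ℕ) (i : ℤ) :
    fwd (Units.val ∘ P) n i
      = (Q (i + n) : Mat₂) * fwd (Units.val ∘ T) n i * (Q i : Mat₂)⁻¹ := by
  induction n with
  | zero => simp [fwd]
  | succ n ih =>
    rw [fwd, ih, fwd, Function.comp_apply, Function.comp_apply, hconj]
    push_cast
    simp [mul_assoc, add_assoc]

theorem IsDS.of_conj {T P Q : ℤ → GL (Fin 2) ℝ} {a b : ℝ}
    (hconj : ∀ i, P i = Q (i + 1) * T i * (Q i)⁻¹) (ha : 0 < a)
    (hQ : ∀ i, BiLipschitzWith a b (Q i)) (hT : IsDS (Units.val ∘ T)) :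
    IsDS (Units.val ∘ P) := by
  obtain ⟨u, s, hinv, N, hN, ⟨η, hη, hdom⟩, ⟨δ, hδ, hsep⟩, ⟨c, hc, hnorm⟩⟩ := hT
  have hb : 0 < b := ha.trans_le (hQ 0).le
  have hu : ∀ i, matAct (T i) (u i) = u (i + 1) := fun i => (hinv i).1
  have hs : ∀ i, matAct (T i) (s i) = s (i + 1) := fun i => (hinv i).2
  have hdomN : ∀ i, η * normOnLine (fwd (Units.val ∘ T) N i) (s i)
      < normOnLine (fwd (Units.val ∘ T) N i) (u i) := fun i => by
    simpa only [norm_mulVecE_of_spansLine _ (spansLine_unitRep _), norm_unitRep, one_mul] using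
      hdom i _ _ (norm_unitRep _) (norm_unitRep _) (spansLine_unitRep _) (spansLine_unitRep _)
  have hlow : ∀ i, c * δ / 2 ≤ normOnLine (fwd (Units.val ∘ T) N i) (u i) := fun i => by
    have hsu := (le_mul_of_one_le_left (normOnLine_nonneg _ _) hη.le).trans (hdomN i).le
    nlinarith [matOpNorm_le_of_dominated hδ (hsep i).le hsu, hnorm i]
  -- `Q` distorts the ratio of the growth along `u` and `s` by at most `(b / a) ^ 2`,
  -- so `k + 1` blocks of length `N` restore domination
  obtain ⟨k, hk⟩ := pow_unbounded_of_one_lt ((b / a) ^ 2) hη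
  have hk' : 1 < η ^ (k + 1) * (a / b) ^ 2 :=
    calc 1 = (b / a) ^ 2 * (a / b) ^ 2 := by field_simp
      _ < η ^ (k + 1) * (a / b) ^ 2 := by
        gcongr; exact hk.trans_le (pow_le_pow_right₀ hη.le k.le_succ)
  refine ⟨fun i => matAct (Q i) (u i), fun i => matAct (Q i) (s i), fun i => ?_, (k + 1) * N,
    Nat.mul_pos k.succ_pos hN, ⟨_, hk', fun i w w' hw hw' hwu hws => ?_⟩,
    ⟨(a / b) ^ 2 * δ, by positivity, fun i => ?_⟩,
    ⟨a / b * (c * δ / 2) ^ (k + 1), by positivity, fun i => ?_⟩⟩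
  · simp only [Function.comp_apply, hconj, Units.val_mul, coe_units_inv, matAct_conj, hu, hs,
      and_self]
  · rw [norm_mulVecE_of_spansLine _ hwu, norm_mulVecE_of_spansLine _ hws, hw, hw', one_mul,
      one_mul, fwd_conj hconj]
    exact (hQ _).mul_normOnLine_conj_lt (hQ i) ha (by positivity)
      (pow_mul_normOnLine_fwd_lt hu hs (by positivity) hdomN k i)
  · calc (a / b) ^ 2 * δ < (a / b) ^ 2 * projDist (u i) (s i) := by gcongr; exact hsep i
      _ ≤ _ := (hQ i).projDist_matAct ha.le _ _
  · calc a / b * (c * δ / 2) ^ (k + 1)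
        ≤ a / b * normOnLine (fwd (Units.val ∘ T) ((k + 1) * N) i) (u i) := by
          gcongr; exact pow_le_normOnLine_fwd hu (by positivity) hlow _ _
      _ ≤ normOnLine (fwd (Units.val ∘ P) ((k + 1) * N) i) (matAct (Q i) (u i)) := by
          rw [fwd_conj hconj]; exact ((hQ _).normOnLine_conj (hQ i) ha _ _).1
      _ ≤ _ := normOnLine_le_matOpNorm _ _

theorem stmt_4_general (T P Q : ℤ → GL (Fin 2) ℝ)
    (hconj : ∀ i : ℤ, (P i : Matrix (Fin 2) (Fin 2) ℝ) =
      (Q (i + 1) : Matrix (Fin 2) (Fin 2) ℝ) * (T i : Matrix (Fin 2) (Fin 2) ℝ) *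
        ((Q i : Matrix (Fin 2) (Fin 2) ℝ))⁻¹)
    (C₁ C₂ : ℝ) (hC₂ : 0 < C₂)
    (hQ : ∀ (i : ℤ) (x : E2),
      C₂ * ‖x‖ ≤ ‖mulVecE (Q i : Matrix (Fin 2) (Fin 2) ℝ) x‖ ∧
        ‖mulVecE (Q i : Matrix (Fin 2) (Fin 2) ℝ) x‖ ≤ C₁ * ‖x‖) :
    IsDS (fun i => (P i : Matrix (Fin 2) (Fin 2) ℝ)) ↔
      IsDS (fun i => (T i : Matrix (Fin 2) (Fin 2) ℝ)) := by
  have hPT : ∀ i, P i = Q (i + 1) * T i * (Q i)⁻¹ := fun i => by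
    ext1; simp [hconj i]
  have hTP : ∀ i, T i = (Q (i + 1))⁻¹ * P i * ((Q i)⁻¹)⁻¹ := fun i => by
    rw [hPT i]; group
  have hQ' : ∀ i, BiLipschitzWith C₂ C₁ (Q i) := hQ
  exact ⟨IsDS.of_conj (Q := fun i => (Q i)⁻¹) hTP (inv_pos.2 (hC₂.trans_le (hQ' 0).le))
      fun i => (hQ' i).inv hC₂,
    IsDS.of_conj hPT hC₂ hQ'⟩

theorem stmt_4 (T P Q : ℤ → GL (Fin 2) ℝ)
    (hTbdd : ∃ C : ℝ, ∀ i : ℤ, matOpNorm (T i : Matrix (Fin 2) (Fin 2) ℝ) ≤ C)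
    (hPbdd : ∃ C : ℝ, ∀ i : ℤ, matOpNorm (P i : Matrix (Fin 2) (Fin 2) ℝ) ≤ C)
    (hconj : ∀ i : ℤ, (P i : Matrix (Fin 2) (Fin 2) ℝ) =
      (Q (i + 1) : Matrix (Fin 2) (Fin 2) ℝ) * (T i : Matrix (Fin 2) (Fin 2) ℝ) *
        ((Q i : Matrix (Fin 2) (Fin 2) ℝ))⁻¹)
    (C₁ C₂ : ℝ) (hC₂ : 0 < C₂) (hC₁₂ : C₂ ≤ C₁)
    (hQ : ∀ (i : ℤ) (x : E2),
      C₂ * ‖x‖ ≤ ‖mulVecE (Q i : Matrix (Fin 2) (Fin 2) ℝ) x‖ ∧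
        ‖mulVecE (Q i : Matrix (Fin 2) (Fin 2) ℝ) x‖ ≤ C₁ * ‖x‖) :
    IsDS (fun i => (P i : Matrix (Fin 2) (Fin 2) ℝ)) ↔
      IsDS (fun i => (T i : Matrix (Fin 2) (Fin 2) ℝ)) :=
  stmt_4_general T P Q hconj C₁ C₂ hC₂ hQ
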